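/- arXiv:2403.04999 — 2 statements merged into one kernel-verified Lean document; each statement's English description precedes it below -/
import Mathlib

section
/- Let Σ be a finite nonempty alphabet, n a positive integer, P ⊆ (Fin n → Σ) a nonempty property, and U : Fin n → Σ. Let V ∈ P be a closest element of P to U, i.e. d(U,V) = d(U,P), and let D = {j : U j ≠ V j}. Then for every subset A ⊆ D, the input U_A satisfies d(U_A, P) = |A|/n. -/
open scoped Classical

/-- A deterministic adaptive `q`-query strategy over inputs `Fin n → Γ`. -/
structure Strategy (Γ : Type*) (n q : ℕ) where
  query : (i : Fin q) → (Fin i → Γ) → Fin n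
  decide : (Fin q → Γ) → Bool

/-- The answers obtained by running a strategy on input `X`. -/
noncomputable def Strategy.answers {Γ : Type*} {n q : ℕ}
    (S : Strategy Γ n q) (X : Fin n → Γ) (i : Fin q) : Γ :=
  X (S.query i (fun j => Strategy.answers S X ⟨j.val, j.isLt.trans i.isLt⟩))
termination_by i.val

/-- A strategy accepts `X` iff its decision on the answers is `true`. -/
def Strategy.accepts {Γ : Type*} {n q : ℕ} (S : Strategy Γ n q) (X : Fin n → Γ) : Prop :=
  S.decide (S.answers X) = true

/-- Acceptance probability of an adaptive randomized algorithm (a PMF over strategies). -/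
noncomputable def acceptProb {Γ : Type*} {n q : ℕ}
    (μ : PMF (Strategy Γ n q)) (X : Fin n → Γ) : ℝ :=
  (∑' S : Strategy Γ n q, if S.accepts X then μ S else 0).toReal

/-- Normalized Hamming distance. -/
noncomputable def hdist {Γ : Type*} {n : ℕ} (X Y : Fin n → Γ) : ℝ :=
  (Finset.univ.filter fun j => X j ≠ Y j).card / n

/-- Distance from an input to a property. -/
noncomputable def distSet {Γ : Type*} {n : ℕ} (X : Fin n → Γ) (P : Set (Fin n → Γ)) : ℝ :=
  sInf ((fun Y => hdist X Y) '' P)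

/-- `μ` is an `ε`-test for `P`. -/
def IsTest {Γ : Type*} {n q : ℕ} (μ : PMF (Strategy Γ n q))
    (P : Set (Fin n → Γ)) (ε : ℝ) : Prop :=
  (∀ X ∈ P, 2/3 ≤ acceptProb μ X) ∧
  (∀ X : Fin n → Γ, ε ≤ distSet X P → acceptProb μ X ≤ 1/3)

/-- The set of indices where `U` and `V` differ. -/
noncomputable def diffSet {Γ : Type*} {n : ℕ} (U V : Fin n → Γ) : Finset (Fin n) :=
  Finset.univ.filter fun j => U j ≠ V j

/-- `patch U V A` takes the values of `U` on `A` and of `V` elsewhere. -/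
def patch {Γ : Type*} {n : ℕ} (U V : Fin n → Γ) (A : Finset (Fin n)) : Fin n → Γ :=
  fun j => if j ∈ A then U j else V j

/-- `μ` is a `(U,V,l)`-distinguisher. -/
def IsDistinguisher {Γ : Type*} {n q : ℕ} (μ : PMF (Strategy Γ n q))
    (U V : Fin n → Γ) (l : ℕ) : Prop :=
  2/3 ≤ acceptProb μ V ∧
  ∀ A : Finset (Fin n), A ⊆ diffSet U V → A.card = l →
    acceptProb μ (patch U V A) ≤ 1/3

/-- A non-adaptive randomized `q`-query algorithm is a PMF over pairs
(query positions, decision function). -/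
abbrev NAStrategy (Γ : Type*) (n q : ℕ) := (Fin q → Fin n) × ((Fin q → Γ) → Bool)

/-- Acceptance probability of a non-adaptive randomized algorithm. -/
noncomputable def naAcceptProb {Γ : Type*} {n q : ℕ}
    (μ : PMF (NAStrategy Γ n q)) (X : Fin n → Γ) : ℝ :=
  (∑' p : NAStrategy Γ n q, if p.2 (fun i => X (p.1 i)) = true then μ p else 0).toReal

/-- `μ` (non-adaptive) is a `(U,V,l)`-distinguisher. -/
def NAIsDistinguisher {Γ : Type*} {n q : ℕ} (μ : PMF (NAStrategy Γ n q))
    (U V : Fin n → Γ) (l : ℕ) : Prop :=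
  2/3 ≤ naAcceptProb μ V ∧
  ∀ A : Finset (Fin n), A ⊆ diffSet U V → A.card = l →
    naAcceptProb μ (patch U V A) ≤ 1/3

/-- Probability that index `j` appears among the query positions of a
non-adaptive algorithm. -/
noncomputable def queryProb {Γ : Type*} {n q : ℕ}
    (μ : PMF (NAStrategy Γ n q)) (j : Fin n) : ℝ :=
  (∑' p : NAStrategy Γ n q, if ∃ i : Fin q, p.1 i = j then μ p else 0).toReal

/-! `U_A` lies between `U` and `V`: `d(U, U_A) + d(U_A, V) = d(U, V)`. Hence for every `Y ∈ P`,
by the triangle inequality and the minimality of `V`,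
`d(U_A, Y) ≥ d(U, Y) - d(U, U_A) ≥ d(U, V) - d(U, U_A) = d(U_A, V) = |A|/n`,
and `Y = V` attains the bound. -/

section

variable {Γ : Type*} {n : ℕ}

lemma hdist_nonneg (X Y : Fin n → Γ) : 0 ≤ hdist X Y := by
  unfold hdist
  positivity

lemma hdist_eq_hammingDist (X Y : Fin n → Γ) : hdist X Y = hammingDist X Y / n := rfl

lemma hdist_triangle (X Y Z : Fin n → Γ) : hdist X Z ≤ hdist X Y + hdist Y Z := by
  rw [hdist_eq_hammingDist, hdist_eq_hammingDist, hdist_eq_hammingDist, ← add_div]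
  gcongr
  exact_mod_cast hammingDist_triangle X Y Z

lemma distSet_le_hdist {X Y : Fin n → Γ} {P : Set (Fin n → Γ)} (hY : Y ∈ P) :
    distSet X P ≤ hdist X Y :=
  csInf_le ⟨0, by rintro _ ⟨Z, -, rfl⟩; exact hdist_nonneg X Z⟩ ⟨Y, hY, rfl⟩

lemma le_distSet {X : Fin n → Γ} {P : Set (Fin n → Γ)} {c : ℝ} (hP : P.Nonempty)
    (h : ∀ Y ∈ P, c ≤ hdist X Y) : c ≤ distSet X P :=
  le_csInf (hP.image _) (by rintro _ ⟨Y, hY, rfl⟩; exact h Y hY)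

lemma distSet_eq_hdist_of_between {P : Set (Fin n → Γ)} {U V W : Fin n → Γ} (hV : V ∈ P)
    (hclosest : hdist U V = distSet U P) (hW : hdist U W + hdist W V = hdist U V) :
    distSet W P = hdist W V := by
  refine le_antisymm (distSet_le_hdist hV) (le_distSet ⟨V, hV⟩ fun Y hY => ?_)
  have hUY : distSet U P ≤ hdist U Y := distSet_le_hdist hY
  linarith [hdist_triangle U W Y]

variable {U V : Fin n → Γ} {A : Finset (Fin n)}

lemma hdist_eq_card_diffSet (X Y : Fin n → Γ) : hdist X Y = (diffSet X Y).card / n := rfl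

lemma diffSet_patch_left (hA : A ⊆ diffSet U V) : diffSet (patch U V A) V = A := by
  ext j
  by_cases hj : j ∈ A
  · simpa [diffSet, patch, hj] using hA hj
  · simp [diffSet, patch, hj]

lemma diffSet_patch_right : diffSet U (patch U V A) = diffSet U V \ A := by
  ext j
  by_cases hj : j ∈ A <;> simp [diffSet, patch, hj]

lemma hdist_add_hdist_patch (hA : A ⊆ diffSet U V) :
    hdist U (patch U V A) + hdist (patch U V A) V = hdist U V := by
  simp only [hdist_eq_card_diffSet, diffSet_patch_left hA, diffSet_patch_right, ← add_div]
  rw [← Nat.cast_add, Finset.card_sdiff_add_card_eq_card hA]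

end

theorem dist_patch_eq_card_div_general {Γ : Type*} {n : ℕ}
    (P : Set (Fin n → Γ))
    (U V : Fin n → Γ) (hV : V ∈ P) (hclosest : hdist U V = distSet U P)
    (A : Finset (Fin n)) (hA : A ⊆ diffSet U V) :
    distSet (patch U V A) P = (A.card : ℝ) / n := by
  rw [distSet_eq_hdist_of_between hV hclosest (hdist_add_hdist_patch hA),
    hdist_eq_card_diffSet, diffSet_patch_left hA]

/-- **Lemma 6 (graded distances).** If `V ∈ P` is a closest element of `P` to `U` and
`D` is the set of indices where `U` and `V` differ, then for every `A ⊆ D` the patched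
input `U_A` satisfies `d(U_A, P) = |A|/n`. -/
theorem dist_patch_eq_card_div {Γ : Type*} [Fintype Γ] [Nonempty Γ] {n : ℕ} (hn : 0 < n)
    (P : Set (Fin n → Γ)) (hP : P.Nonempty)
    (U V : Fin n → Γ) (hV : V ∈ P) (hclosest : hdist U V = distSet U P)
    (A : Finset (Fin n)) (hA : A ⊆ diffSet U V) :
    distSet (patch U V A) P = (A.card : ℝ) / n :=
  dist_patch_eq_card_div_general P U V hV hclosest A hA
end

section
/- Let Σ be a finite nonempty alphabet, n a positive integer, U, V : Fin n → Σ, D = {j : U j ≠ V j}, and l an integer with 1 ≤ l ≤ |D|. Then every adaptive randomized q-query algorithm that is a (U,V,l)-distinguisher satisfies q ≥ |D|/(3l). -/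
/-! Fix a strategy and read it on `V`. If none of the (at most `q`) positions it queries lies
in `A`, it cannot tell `V` from `U_A`, so the acceptance probabilities of `V` and `U_A` differ by
at most the probability that the queries made on `V` hit `A`. A position of `D` lies in
exactly a fraction `l / |D|` of the `l`-subsets of `D`, so averaging over `A` gives some `A` that
is hit with probability at most `q l / |D|`; the distinguisher forces this to be at least `1/3`. -/

open scoped Classical

open Finset MeasureTheory

namespace Strategy

variable {Γ : Type*} {n q : ℕ} (S : Strategy Γ n q)

noncomputable def queryPos (X : Fin n → Γ) (i : Fin q) : Fin n :=
  S.query i (fun j => S.answers X ⟨j.val, j.isLt.trans i.isLt⟩)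

noncomputable def queriedSet (X : Fin n → Γ) : Finset (Fin n) :=
  univ.image (S.queryPos X)

lemma answers_apply (X : Fin n → Γ) (i : Fin q) : S.answers X i = X (S.queryPos X i) := by
  rw [answers]; rfl

lemma card_queriedSet_le (X : Fin n → Γ) : #(S.queriedSet X) ≤ q :=
  card_image_le.trans (card_fin q).le

lemma answers_eq_of_eqOn {X Y : Fin n → Γ} (h : Set.EqOn X Y (S.queriedSet Y)) :
    S.answers X = S.answers Y := by
  funext i
  induction i using WellFoundedLT.induction with
  | _ i ih =>
    have hpos : S.queryPos X i = S.queryPos Y i := by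
      unfold queryPos
      congr 1
      funext j
      exact ih _ j.isLt
    rw [answers_apply, answers_apply, hpos]
    exact h (mem_image_of_mem _ (mem_univ i))

lemma accepts_iff_of_eqOn {X Y : Fin n → Γ} (h : Set.EqOn X Y (S.queriedSet Y)) :
    S.accepts X ↔ S.accepts Y := by
  rw [accepts, accepts, S.answers_eq_of_eqOn h]

end Strategy

lemma PMF.toOuterMeasure_ne_top {α : Type*} (μ : PMF α) (s : Set α) :
    μ.toOuterMeasure s ≠ ⊤ :=
  μ.toOuterMeasure_apply s ▸ μ.tsum_coe_indicator_ne_top s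

lemma PMF.sum_toOuterMeasure_le {α ι : Type*} (μ : PMF α) (s : Finset ι) (E : ι → Set α)
    (k : ℕ) (h : ∀ x, #{i ∈ s | x ∈ E i} ≤ k) : ∑ i ∈ s, μ.toOuterMeasure (E i) ≤ k := by
  calc ∑ i ∈ s, μ.toOuterMeasure (E i)
      = ∑' x, (#{i ∈ s | x ∈ E i} : ENNReal) * μ x := by
        simp only [PMF.toOuterMeasure_apply]
        rw [← Summable.tsum_finsetSum (fun _ _ => ENNReal.summable)]
        refine tsum_congr fun x => ?_
        simp only [Set.indicator_apply, ← sum_filter, sum_const, nsmul_eq_mul]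
    _ ≤ ∑' x, (k : ENNReal) * μ x := ENNReal.tsum_le_tsum fun x => by gcongr; exact h x
    _ = k := by rw [ENNReal.tsum_mul_left, μ.tsum_coe, mul_one]

lemma card_filter_mem_powersetCard_le {α : Type*} [DecidableEq α] (D : Finset α) {l : ℕ}
    (hl : 1 ≤ l) (a : α) : #{A ∈ D.powersetCard l | a ∈ A} ≤ (#D - 1).choose (l - 1) := by
  by_cases ha : a ∈ D
  · simp_rw [← singleton_subset_iff (a := a)]
    rw [card_filter_powersetCard_subset _ _ _ (singleton_subset_iff.mpr ha) (by simpa using hl),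
      card_singleton]
  · rw [filter_false_of_mem fun A hA haA => ha ((mem_powersetCard.mp hA).1 haA), card_empty]
    exact Nat.zero_le _

lemma card_powersetCard_filter_not_disjoint_le {α : Type*} [DecidableEq α] (Q D : Finset α)
    {l : ℕ} (hl : 1 ≤ l) :
    #{A ∈ D.powersetCard l | ¬Disjoint Q A} ≤ #Q * (#D - 1).choose (l - 1) := by
  calc #{A ∈ D.powersetCard l | ¬Disjoint Q A}
      ≤ ∑ A ∈ D.powersetCard l, #(Q ∩ A) := by
        rw [card_eq_sum_ones, sum_filter]
        refine sum_le_sum fun A _ => ?_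
        split_ifs with hQA
        · exact Nat.zero_le _
        · exact card_pos.mpr (not_disjoint_iff_nonempty_inter.mp hQA)
    _ ≤ #Q * (#D - 1).choose (l - 1) :=
        sum_card_inter_le fun a _ => card_filter_mem_powersetCard_le D hl a

lemma Nat.mul_choose_sub_one_sub_one {m l : ℕ} (hl : 1 ≤ l) (hlm : l ≤ m) :
    m * (m - 1).choose (l - 1) = l * m.choose l := by
  obtain ⟨m, rfl⟩ := Nat.exists_eq_add_of_le' (hl.trans hlm)
  obtain ⟨l, rfl⟩ := Nat.exists_eq_add_of_le' hl
  simpa [mul_comm] using Nat.add_one_mul_choose_eq m l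

lemma patch_eqOn_of_disjoint {Γ : Type*} {n : ℕ} (U V : Fin n → Γ) {A Q : Finset (Fin n)}
    (h : Disjoint Q A) : Set.EqOn (patch U V A) V Q := fun _ hj =>
  if_neg (disjoint_left.mp h hj)

section Hitting

variable {Γ : Type*} {n q : ℕ} (μ : PMF (Strategy Γ n q))

noncomputable def hitProb (X : Fin n → Γ) (A : Finset (Fin n)) : ENNReal :=
  μ.toOuterMeasure {S | ¬Disjoint (S.queriedSet X) A}

lemma acceptProb_eq_toOuterMeasure (X : Fin n → Γ) :
    acceptProb μ X = (μ.toOuterMeasure {S | S.accepts X}).toReal := by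
  rw [acceptProb, PMF.toOuterMeasure_apply]
  rfl

lemma acceptProb_le_acceptProb_patch_add_hitProb (U V : Fin n → Γ) (A : Finset (Fin n)) :
    acceptProb μ V ≤ acceptProb μ (patch U V A) + (hitProb μ V A).toReal := by
  have hsub : {S : Strategy Γ n q | S.accepts V}
      ⊆ {S | S.accepts (patch U V A)} ∪ {S | ¬Disjoint (S.queriedSet V) A} := by
    intro S hS
    by_contra! hmiss
    simp only [Set.mem_union, Set.mem_ofPred_eq, not_or, not_not] at hmiss
    exact hmiss.1 ((S.accepts_iff_of_eqOn (patch_eqOn_of_disjoint U V hmiss.2)).mpr hS)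
  simp only [acceptProb_eq_toOuterMeasure, hitProb]
  exact ENNReal.toReal_le_add ((measure_mono hsub).trans (measure_union_le _ _))
    (μ.toOuterMeasure_ne_top _) (μ.toOuterMeasure_ne_top _)

lemma exists_hitProb_le (X : Fin n → Γ) (D : Finset (Fin n)) {l : ℕ} (hl : 1 ≤ l)
    (hlD : l ≤ #D) : ∃ A ∈ D.powersetCard l, #D * hitProb μ X A ≤ q * l := by
  have hsum : ∑ A ∈ D.powersetCard l, hitProb μ X A ≤ (q * (#D - 1).choose (l - 1) : ℕ) :=
    μ.sum_toOuterMeasure_le _ _ _ fun S => by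
      simpa only [Set.mem_ofPred_eq] using (card_powersetCard_filter_not_disjoint_le _ D hl).trans
        (Nat.mul_le_mul_right _ (S.card_queriedSet_le X))
  refine ENNReal.exists_le_of_sum_le (powersetCard_nonempty.mpr hlD) ?_
  calc ∑ A ∈ D.powersetCard l, #D * hitProb μ X A
      ≤ #D * (q * (#D - 1).choose (l - 1) : ℕ) := by rw [← mul_sum]; gcongr
    _ = ∑ A ∈ D.powersetCard l, (q * l : ENNReal) := by
        have hcount : #D * (q * (#D - 1).choose (l - 1)) = (#D).choose l * (q * l) := by
          rw [mul_left_comm, Nat.mul_choose_sub_one_sub_one hl hlD]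
          ring
        rw [sum_const, card_powersetCard, nsmul_eq_mul]
        exact_mod_cast hcount

end Hitting

theorem distinguisher_lower_bound_general {Γ : Type*} {n : ℕ}
    (U V : Fin n → Γ) (l : ℕ) (hl : 1 ≤ l) (hlD : l ≤ (diffSet U V).card)
    (q : ℕ) (μ : PMF (Strategy Γ n q)) (hμ : IsDistinguisher μ U V l) :
    ((diffSet U V).card : ℝ) / (3 * l) ≤ q := by
  obtain ⟨hV, hpatch⟩ := hμ
  obtain ⟨A, hA, hhit⟩ := exists_hitProb_le μ V (diffSet U V) hl hlD
  obtain ⟨hAD, hAl⟩ := mem_powersetCard.mp hA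
  have hhit_ge : 1 / 3 ≤ (hitProb μ V A).toReal := by
    linarith [acceptProb_le_acceptProb_patch_add_hitProb μ U V A, hpatch A hAD hAl]
  have hhit_le : ((diffSet U V).card : ℝ) * (hitProb μ V A).toReal ≤ q * l := by
    simpa using ENNReal.toReal_mono (by simp [ENNReal.mul_eq_top]) hhit
  have hl_pos : (0 : ℝ) < l := by exact_mod_cast hl
  rw [div_le_iff₀ (by positivity)]
  nlinarith

/-- **Lemma 10.** Any adaptive randomized `q`-query `(U,V,l)`-distinguisher satisfies
`q ≥ |D|/(3l)`, where `D = {j : U j ≠ V j}`. -/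
theorem distinguisher_lower_bound {Γ : Type*} [Fintype Γ] [Nonempty Γ] {n : ℕ}
    (hn : 0 < n) (U V : Fin n → Γ) (l : ℕ) (hl : 1 ≤ l) (hlD : l ≤ (diffSet U V).card)
    (q : ℕ) (μ : PMF (Strategy Γ n q)) (hμ : IsDistinguisher μ U V l) :
    ((diffSet U V).card : ℝ) / (3 * l) ≤ q :=
  distinguisher_lower_bound_general U V l hl hlD q μ hμ
end
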